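/- arXiv:1305.6973 — 2 statements merged into one kernel-verified Lean document; each statement's English description precedes it below -/
import Mathlib

section
/- (Cleaning lemma for stabilizer codes.) Let S ≤ F₂^{2n} be a subspace on which the standard symplectic form vanishes identically (a stabilizer space), and set 2k = dim(S^⊥) − dim(S). For any partition of the n coordinates into sets M and M^c, define g(M) = dim((S^⊥ ∩ P_M)/(S ∩ P_M)), the number of independent logical operators supported on M. Then g(M) + g(M^c) = 2k. -/
/-!
`S^⊥ ∩ P_M` is the orthogonal complement of `S + P_{Mᶜ}`, since `P_M^⊥ = P_{Mᶜ}`. Nondegeneracy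
of the symplectic form and the dimension formula for `S + P_{Mᶜ}` then give
`g(M) = 2n - dim S - dim P_{Mᶜ} + dim (S ∩ P_{Mᶜ}) - dim (S ∩ P_M)`. Adding the same formula for
`Mᶜ`, the terms `dim (S ∩ P_·)` cancel and `dim P_M + dim P_{Mᶜ} = 2n`, leaving
`2n - 2 dim S = dim S^⊥ - dim S = 2k`.
-/

/-- The `n`-qubit Pauli space `P = F₂ⁿ × F₂ⁿ`. -/
abbrev PauliSpace (n : ℕ) := (Fin n → ZMod 2) × (Fin n → ZMod 2)

/-- The standard symplectic form `λ((a,b),(c,d)) = a·d + b·c` on `PauliSpace n`. -/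
def sympForm {n : ℕ} (p q : PauliSpace n) : ZMod 2 :=
  dotProduct p.1 q.2 + dotProduct p.2 q.1

/-- The orthogonal complement `G^⊥ = {x : λ(x,g) = 0 for all g ∈ G}`. -/
def sympOrtho {n : ℕ} (G : Submodule (ZMod 2) (PauliSpace n)) :
    Submodule (ZMod 2) (PauliSpace n) where
  carrier := {x | ∀ g ∈ G, sympForm x g = 0}
  add_mem' := by
    intro a b ha hb g hg
    have h : sympForm (a + b) g = sympForm a g + sympForm b g := by
      simp only [sympForm, Prod.fst_add, Prod.snd_add, add_dotProduct]
      ring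
    rw [h, ha g hg, hb g hg, add_zero]
  zero_mem' := by
    intro g hg
    simp [sympForm]
  smul_mem' := by
    intro c a ha g hg
    have h : sympForm (c • a) g = c * sympForm a g := by
      simp only [sympForm, Prod.smul_fst, Prod.smul_snd, smul_dotProduct,
        smul_eq_mul]
      ring
    rw [h, ha g hg, mul_zero]

/-- `P_M`: the subspace of Pauli vectors supported on the coordinate set `M`. -/
def suppIn {n : ℕ} (M : Finset (Fin n)) : Submodule (ZMod 2) (PauliSpace n) where
  carrier := {p | ∀ i, i ∉ M → p.1 i = 0 ∧ p.2 i = 0}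
  add_mem' := by
    intro a b ha hb i hi
    obtain ⟨h1, h2⟩ := ha i hi
    obtain ⟨h3, h4⟩ := hb i hi
    constructor <;> simp [h1, h2, h3, h4]
  zero_mem' := by intro i _; simp
  smul_mem' := by
    intro c a ha i hi
    obtain ⟨h1, h2⟩ := ha i hi
    constructor <;> simp [h1, h2]

/-- `g(M) = dim ((S^⊥ ∩ P_M) / (S ∩ P_M))`, the number of independent logical operators
supported on `M`. -/
noncomputable def numLogical {n : ℕ} (S : Submodule (ZMod 2) (PauliSpace n))
    (M : Finset (Fin n)) : ℕ :=
  Module.finrank (ZMod 2)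
    ((sympOrtho S ⊓ suppIn M : Submodule (ZMod 2) (PauliSpace n)) ⧸
      Submodule.comap (sympOrtho S ⊓ suppIn M : Submodule (ZMod 2) (PauliSpace n)).subtype
        (S ⊓ suppIn M))

open Module

theorem Submodule.finrank_quotient_comap_subtype_add_finrank {K V : Type*} [DivisionRing K]
    [AddCommGroup V] [Module K V] [FiniteDimensional K V] {p q : Submodule K V} (h : p ≤ q) :
    finrank K (q ⧸ p.comap q.subtype) + finrank K p = finrank K q := by
  rw [← (Submodule.comapSubtypeEquivOfLe h).finrank_eq]
  exact Submodule.finrank_quotient_add_finrank _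

section Pauli

variable {n : ℕ}

-- The arguments are swapped so that `orthogonal` is `sympOrtho` on the nose.
noncomputable def sympBilinForm (n : ℕ) : LinearMap.BilinForm (ZMod 2) (PauliSpace n) :=
  LinearMap.mk₂ (ZMod 2) (fun p q => sympForm q p)
    (by intro a b c; simp only [sympForm, Prod.fst_add, Prod.snd_add, dotProduct_add]; ring)
    (by intro c a b; simp only [sympForm, Prod.smul_fst, Prod.smul_snd, dotProduct_smul,
      smul_eq_mul]; ring)
    (by intro a b c; simp only [sympForm, Prod.fst_add, Prod.snd_add, add_dotProduct]; ring)
    (by intro c a b; simp only [sympForm, Prod.smul_fst, Prod.smul_snd, smul_dotProduct,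
      smul_eq_mul]; ring)

theorem sympOrtho_eq_orthogonal (G : Submodule (ZMod 2) (PauliSpace n)) :
    sympOrtho G = (sympBilinForm n).orthogonal G :=
  rfl

theorem ker_sympBilinForm : LinearMap.ker (sympBilinForm n) = ⊥ := by
  refine (Submodule.eq_bot_iff _).2 fun x hx => ?_
  have hx : ∀ y, sympForm y x = 0 := fun y => LinearMap.congr_fun hx y
  ext i
  · simpa [sympForm, single_dotProduct] using hx (0, Pi.single i 1)
  · simpa [sympForm, single_dotProduct] using hx (Pi.single i 1, 0)

theorem finrank_add_finrank_sympOrtho (G : Submodule (ZMod 2) (PauliSpace n)) :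
    finrank (ZMod 2) G + finrank (ZMod 2) (sympOrtho G) = 2 * n := by
  rw [sympOrtho_eq_orthogonal, LinearMap.BilinForm.finrank_add_finrank_orthogonal',
    ker_sympBilinForm, inf_bot_eq, finrank_bot, add_zero, finrank_prod, finrank_fin_fun]
  ring

theorem sympOrtho_sup (A B : Submodule (ZMod 2) (PauliSpace n)) :
    sympOrtho (A ⊔ B) = sympOrtho A ⊓ sympOrtho B := by
  ext x
  simp only [sympOrtho_eq_orthogonal, Submodule.mem_inf, LinearMap.BilinForm.mem_orthogonal_iff]
  refine ⟨fun h => ⟨fun a ha => h a (Submodule.mem_sup_left ha),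
    fun b hb => h b (Submodule.mem_sup_right hb)⟩, fun ⟨hA, hB⟩ g hg => ?_⟩
  obtain ⟨a, ha, b, hb, rfl⟩ := Submodule.mem_sup.1 hg
  rw [map_add, LinearMap.add_apply, hA a ha, hB b hb, add_zero]

theorem sympOrtho_suppIn (M : Finset (Fin n)) : sympOrtho (suppIn M) = suppIn Mᶜ := by
  ext x
  constructor
  · intro hx i hi
    have hi : i ∈ M := by simpa using hi
    have hsingle : ∀ a b : ZMod 2, (Pi.single i a, Pi.single i b) ∈ suppIn M :=
      fun a b j hj => by simp [Pi.single_eq_of_ne (ne_of_mem_of_not_mem hi hj).symm]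
    constructor
    · simpa [sympForm, dotProduct_single] using hx _ (hsingle 0 1)
    · simpa [sympForm, dotProduct_single] using hx _ (hsingle 1 0)
  · intro hx g hg
    simp only [sympForm, dotProduct, ← Finset.sum_add_distrib]
    refine Finset.sum_eq_zero fun i _ => ?_
    by_cases hi : i ∈ M
    · obtain ⟨h1, h2⟩ := hx i (by simpa using hi)
      simp [h1, h2]
    · obtain ⟨h1, h2⟩ := hg i hi
      simp [h1, h2]

theorem finrank_suppIn_add_finrank_suppIn_compl (M : Finset (Fin n)) :
    finrank (ZMod 2) (suppIn M) + finrank (ZMod 2) (suppIn Mᶜ) = 2 * n := by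
  rw [← sympOrtho_suppIn]
  exact finrank_add_finrank_sympOrtho _

theorem finrank_sympOrtho_inf_suppIn (S : Submodule (ZMod 2) (PauliSpace n))
    (M : Finset (Fin n)) :
    finrank (ZMod 2) (sympOrtho S ⊓ suppIn M : Submodule (ZMod 2) (PauliSpace n)) +
        finrank (ZMod 2) S + finrank (ZMod 2) (suppIn Mᶜ) =
      2 * n + finrank (ZMod 2) (S ⊓ suppIn Mᶜ : Submodule (ZMod 2) (PauliSpace n)) := by
  have hortho : sympOrtho (S ⊔ suppIn Mᶜ) = sympOrtho S ⊓ suppIn M := by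
    rw [sympOrtho_sup, sympOrtho_suppIn, compl_compl]
  have hdual := finrank_add_finrank_sympOrtho (S ⊔ suppIn Mᶜ)
  have hsup := Submodule.finrank_sup_add_finrank_inf_eq S (suppIn Mᶜ)
  rw [hortho] at hdual
  omega

theorem numLogical_add_finrank_inf {S : Submodule (ZMod 2) (PauliSpace n)}
    (hnull : S ≤ sympOrtho S) (M : Finset (Fin n)) :
    numLogical S M + finrank (ZMod 2) (S ⊓ suppIn M : Submodule (ZMod 2) (PauliSpace n)) =
      finrank (ZMod 2) (sympOrtho S ⊓ suppIn M : Submodule (ZMod 2) (PauliSpace n)) :=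
  Submodule.finrank_quotient_comap_subtype_add_finrank (inf_le_inf_right _ hnull)

end Pauli

/-- Cleaning lemma for stabilizer codes: if `S` is a null (stabilizer) subspace of the
`n`-qubit Pauli space and `2k = dim S^⊥ − dim S`, then for any set `M` of coordinates,
`g(M) + g(Mᶜ) = 2k`. -/
theorem statement_2 {n : ℕ} (S : Submodule (ZMod 2) (PauliSpace n))
    (hnull : S ≤ sympOrtho S) (k : ℕ)
    (hk : Module.finrank (ZMod 2) (sympOrtho S) = 2 * k + Module.finrank (ZMod 2) S)
    (M : Finset (Fin n)) :
    numLogical S M + numLogical S Mᶜ = 2 * k := by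
  have hM := numLogical_add_finrank_inf hnull M
  have hMc := numLogical_add_finrank_inf hnull Mᶜ
  have hdimM := finrank_sympOrtho_inf_suppIn S M
  have hdimMc := finrank_sympOrtho_inf_suppIn S Mᶜ
  rw [compl_compl] at hdimMc
  have hsupp := finrank_suppIn_add_finrank_suppIn_compl M
  have hS := finrank_add_finrank_sympOrtho S
  omega
end

section
/- Let R = F₂[x^{±1}, y^{±1}] be the Laurent polynomial ring in two variables and let σ : R² → R⁴ be given by the matrix with columns (1+x̄, 1+ȳ, 0, 0)ᵀ and (0, 0, 1+y, 1+x)ᵀ, where x̄ = x^{−1}, ȳ = y^{−1} (the 2D toric code generating map). Let ε : R⁴ → R² be the matrix with rows (0, 0, 1+x, 1+y) and (1+ȳ, 1+x̄, 0, 0). Then ε ∘ σ = 0 and ker ε = im σ, i.e. the sequence R² → R⁴ → R² is exact at R⁴. -/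
/-! The relations `ε v = 0` read `(1+y) v₃ + (1+x) v₂ = 0` and `(1+x̄) v₁ + (1+ȳ) v₀ = 0`.
In a relation `a u + b w = 0` with `a = 1+y` (resp. `1+x̄`), the substitution `y = 1`
(resp. `x = 1`) maps `R` onto the domain `F₂[t^{±1}]` with kernel `(a)` and does not kill `b`,
so `a ∣ w`; cancelling `a` in the domain `R` then writes `(w, u)` as a multiple of `(a, b)`,
i.e. of a column of `σ`. -/

open AddMonoidAlgebra

/-- Laurent polynomial ring `F₂[x^{±1}, y^{±1}]` realized as the group algebra of `ℤ²`
over `F₂`. -/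
abbrev LaurentF2 := AddMonoidAlgebra (ZMod 2) (ℤ × ℤ)

/-- The Laurent monomial `x^i y^j`. -/
noncomputable def lmon (i j : ℤ) : LaurentF2 := AddMonoidAlgebra.single (i, j) 1

/-- The 2D toric code generating map `σ : R² → R⁴`, as a `4×2` matrix with columns
`(1+x⁻¹, 1+y⁻¹, 0, 0)ᵀ` and `(0, 0, 1+y, 1+x)ᵀ`. -/
noncomputable def toricSigma : Matrix (Fin 4) (Fin 2) LaurentF2 :=
  !![1 + lmon (-1) 0, 0;
     1 + lmon 0 (-1), 0;
     0, 1 + lmon 0 1;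
     0, 1 + lmon 1 0]

/-- The 2D toric code excitation map `ε : R⁴ → R²`, as a `2×4` matrix with rows
`(0, 0, 1+x, 1+y)` and `(1+y⁻¹, 1+x⁻¹, 0, 0)`. -/
noncomputable def toricEpsilon : Matrix (Fin 2) (Fin 4) LaurentF2 :=
  !![0, 0, 1 + lmon 1 0, 1 + lmon 0 1;
     1 + lmon 0 (-1), 1 + lmon (-1) 0, 0, 0]

namespace AddMonoidAlgebra

variable {k G H : Type*} [CommRing k] [AddCommGroup G] [AddCommGroup H]

theorem single_sub_one_mem_of_mem_zmultiples {I : Ideal k[G]} {e g : G}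
    (he : single e 1 - 1 ∈ I) (hg : g ∈ AddSubgroup.zmultiples e) : single g (1 : k) - 1 ∈ I := by
  let S : AddSubgroup G :=
    { carrier := {g | single g (1 : k) - 1 ∈ I}
      zero_mem' := by simp [← one_def]
      add_mem' := fun {g h} hg hh => by
        have : single (g + h) (1 : k) - 1 = single g 1 * (single h 1 - 1) + (single g 1 - 1) := by
          rw [mul_sub, single_mul_single, mul_one, mul_one]; ring
        rw [Set.mem_ofPred_eq, this]
        exact I.add_mem (I.mul_mem_left _ hh) hg
      neg_mem' := fun {g} hg => by
        have : single (-g) (1 : k) - 1 = -(single (-g) 1 * (single g 1 - 1)) := by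
          rw [mul_sub, single_mul_single, neg_add_cancel, mul_one, mul_one, ← one_def]; ring
        rw [Set.mem_ofPred_eq, this]
        exact I.neg_mem (I.mul_mem_left _ hg) }
  exact (AddSubgroup.zmultiples_le (H := S)).2 he hg

theorem ker_mapDomainRingHom {π : G →+ H} (hπ : Function.Surjective π) {e : G}
    (he : π.ker = AddSubgroup.zmultiples e) :
    RingHom.ker (mapDomainRingHom k π) = Ideal.span {single e 1 - 1} := by
  set I := Ideal.span {(single e 1 - 1 : k[G])}
  refine le_antisymm (fun a ha => ?_) ?_
  · set s := Function.surjInv hπ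
    -- Moving each monomial `g` to the representative `s (π g)` of its coset changes `b` by an
    -- element of `I`.
    have hmove : ∀ b : k[G], b - mapDomain (s ∘ π) b ∈ I := by
      intro b
      induction b using induction_linear with
      | zero => simp
      | add x y hx hy => simpa [mapDomain_add, add_sub_add_comm] using I.add_mem hx hy
      | single g r =>
        have hker : g - s (π g) ∈ π.ker := by
          simp [s, Function.surjInv_eq hπ]
        rw [he] at hker
        have := I.mul_mem_left (single (s (π g)) r)
          (single_sub_one_mem_of_mem_zmultiples (Ideal.subset_span rfl) hker)
        simpa [mul_sub, single_mul_single] using this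
    have hzero : mapDomain (s ∘ π) a = 0 := by
      have hcomp : mapDomain (s ∘ π) a = mapDomain s (mapDomain π a) := by
        ext; simp [Finsupp.mapDomain_comp]
      rw [hcomp, ← mapDomainRingHom_apply, RingHom.mem_ker.1 ha, mapDomain_zero]
    simpa [hzero] using hmove a
  · have : π e = 0 := by simp [← AddMonoidHom.mem_ker, he, AddSubgroup.mem_zmultiples]
    rw [Ideal.span_le, Set.singleton_subset_iff, SetLike.mem_coe, RingHom.mem_ker, map_sub,
      map_one, mapDomainRingHom_apply, mapDomain_single, this, ← one_def, sub_self]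

theorem one_add_single_ne_zero {M : Type*} [AddMonoid M] [Nontrivial k] {g : M} (hg : g ≠ 0) :
    (1 : k[M]) + single g 1 ≠ 0 := by
  rw [Ne, add_eq_zero_iff_neg_eq, one_def, ← single_neg, single_inj]
  simp [Ne.symm hg]

end AddMonoidAlgebra

theorem exists_eq_mul_of_mul_add_mul_eq_zero {R S : Type*} [CommRing R] [IsDomain R] [CommRing S]
    [IsDomain S] {φ : R →+* S} {a b u w : R} (hker : RingHom.ker φ = Ideal.span {a}) (ha : a ≠ 0)
    (hb : φ b ≠ 0) (h : a * u + b * w = 0) : ∃ c, w = a * c ∧ u = -(b * c) := by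
  have hw : w ∈ RingHom.ker φ := by
    have hbw : b * w ∈ RingHom.ker φ := by
      rw [hker, Ideal.mem_span_singleton']
      exact ⟨-u, by linear_combination -h⟩
    rw [RingHom.mem_ker, map_mul] at hbw
    rw [RingHom.mem_ker]
    exact (mul_eq_zero.1 hbw).resolve_left hb
  obtain ⟨c, rfl⟩ := Ideal.mem_span_singleton.1 (hker ▸ hw)
  refine ⟨c, rfl, mul_left_cancel₀ ha ?_⟩
  linear_combination h

instance : CharP LaurentF2 2 :=
  charP_of_injective_algebraMap (R := ZMod 2) (fun r s h => by simpa using h) 2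

theorem single_sub_one_eq_one_add_lmon (i j : ℤ) : single (i, j) 1 - 1 = 1 + lmon i j := by
  rw [sub_eq_add_neg, CharTwo.neg_eq, add_comm, lmon]

theorem one_add_lmon_ne_zero {i j : ℤ} (h : (i, j) ≠ 0) : 1 + lmon i j ≠ 0 :=
  one_add_single_ne_zero h

theorem ker_mapDomainRingHom_fst :
    RingHom.ker (mapDomainRingHom (ZMod 2) (AddMonoidHom.fst ℤ ℤ)) =
      Ideal.span {1 + lmon 0 1} := by
  rw [ker_mapDomainRingHom Prod.fst_surjective (e := (0, 1)), single_sub_one_eq_one_add_lmon]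
  ext ⟨i, j⟩
  rw [AddMonoidHom.mem_ker, AddSubgroup.mem_zmultiples_iff]
  simp [Prod.ext_iff, eq_comm]

theorem ker_mapDomainRingHom_snd :
    RingHom.ker (mapDomainRingHom (ZMod 2) (AddMonoidHom.snd ℤ ℤ)) =
      Ideal.span {1 + lmon (-1) 0} := by
  rw [ker_mapDomainRingHom Prod.snd_surjective (e := (-1, 0)), single_sub_one_eq_one_add_lmon]
  ext ⟨i, j⟩
  rw [AddMonoidHom.mem_ker, AddSubgroup.mem_zmultiples_iff]
  simpa [Prod.ext_iff, eq_comm] using fun _ => ⟨-i, (neg_neg i).symm⟩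

theorem toricEpsilon_mul_toricSigma : toricEpsilon * toricSigma = 0 := by
  ext i j
  fin_cases i <;> fin_cases j <;>
    simp [toricEpsilon, toricSigma, Matrix.mul_apply, Fin.sum_univ_four, mul_comm,
      CharTwo.add_self_eq_zero]

theorem ker_toricEpsilon_le_range_toricSigma :
    LinearMap.ker toricEpsilon.mulVecLin ≤ LinearMap.range toricSigma.mulVecLin := by
  intro v hv
  have hεv := congrFun (LinearMap.mem_ker.1 hv)
  have h0 : (1 + lmon 0 1) * v 3 + (1 + lmon 1 0) * v 2 = 0 := by
    simpa [toricEpsilon, Matrix.mulVec, dotProduct, Fin.sum_univ_four, add_comm] using hεv 0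
  have h1 : (1 + lmon (-1) 0) * v 1 + (1 + lmon 0 (-1)) * v 0 = 0 := by
    simpa [toricEpsilon, Matrix.mulVec, dotProduct, Fin.sum_univ_four, add_comm] using hεv 1
  have hx : mapDomainRingHom (ZMod 2) (AddMonoidHom.fst ℤ ℤ) (1 + lmon 1 0) ≠ 0 := by
    simp only [map_add, map_one, lmon, mapDomainRingHom_apply, mapDomain_single]
    exact one_add_single_ne_zero (by decide)
  have hy : mapDomainRingHom (ZMod 2) (AddMonoidHom.snd ℤ ℤ) (1 + lmon 0 (-1)) ≠ 0 := by
    simp only [map_add, map_one, lmon, mapDomainRingHom_apply, mapDomain_single]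
    exact one_add_single_ne_zero (by decide)
  obtain ⟨c, hc2, hc3⟩ := exists_eq_mul_of_mul_add_mul_eq_zero ker_mapDomainRingHom_fst
    (one_add_lmon_ne_zero (by decide)) hx h0
  obtain ⟨d, hd0, hd1⟩ := exists_eq_mul_of_mul_add_mul_eq_zero ker_mapDomainRingHom_snd
    (one_add_lmon_ne_zero (by decide)) hy h1
  refine ⟨![d, c], funext fun i => ?_⟩
  fin_cases i <;>
    simp [toricSigma, Matrix.mulVec, dotProduct, hc2, hc3, hd0, hd1, CharTwo.neg_eq, mul_comm]

/-- Exactness of the 2D toric code: `ε ∘ σ = 0` and `ker ε = im σ`, i.e. the sequence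
`R² →σ R⁴ →ε R²` is exact at `R⁴`. -/
theorem statement_19 :
    toricEpsilon * toricSigma = 0 ∧
    LinearMap.ker toricEpsilon.mulVecLin = LinearMap.range toricSigma.mulVecLin := by
  refine ⟨toricEpsilon_mul_toricSigma, le_antisymm ker_toricEpsilon_le_range_toricSigma ?_⟩
  rintro _ ⟨u, rfl⟩
  rw [LinearMap.mem_ker, Matrix.mulVecLin_apply, Matrix.mulVecLin_apply, Matrix.mulVec_mulVec,
    toricEpsilon_mul_toricSigma, Matrix.zero_mulVec]
end
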